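/- arXiv:1109.2477 — 2 statements merged into one kernel-verified Lean document; each statement's English description precedes it below -/
import Mathlib

section
/- Let K ⊆ ℝⁿ be a convex body and x, y ∈ int(K) with max(‖x−y‖_{K−y}, ‖y−x‖_{K−y}) ≤ α < 1. Then for every z ∈ ℝⁿ, ‖z − x‖_{K−x} ≤ ‖z − y‖_{K−y} + (α/(1−α))·|1 − ‖z − y‖_{K−y}|. -/
/-! Write `g_c` for the gauge of `K - c`. If `x - y = a • (k' - y)` with `k' ∈ K` and
`a = g_y (x - y) < 1`, then `s • (k - y) = (s / (1 - a)) • (a • k' + (1 - a) • k - x)`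
for every `k ∈ K`, so `g_x ≤ g_y / (1 - a)`; in particular `g_x (±(y - x)) ≤ α / (1 - α)`.
Writing `z - y = t • (k - y)` with `t = g_y (z - y)` and `k ∈ K` gives
`z - x = t • (k - x) + (1 - t) • (y - x)`, and the triangle inequality for `g_x` concludes. -/

open Topology

theorem gauge_smul_le_abs_mul_max {E : Type*} [AddCommGroup E] [Module ℝ E] (S : Set E) (r : ℝ)
    (v : E) :
    gauge S (r • v) ≤ |r| * max (gauge S v) (gauge S (-v)) := by
  rcases le_total 0 r with hr | hr
  · rw [gauge_smul_of_nonneg hr, abs_of_nonneg hr, smul_eq_mul]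
    exact mul_le_mul_of_nonneg_left (le_max_left _ _) hr
  · rw [← neg_smul_neg, gauge_smul_of_nonneg (neg_nonneg.2 hr), abs_of_nonpos hr, smul_eq_mul]
    exact mul_le_mul_of_nonneg_left (le_max_right _ _) (neg_nonneg.2 hr)

theorem image_sub_const_mem_nhds_zero {G : Type*} [AddGroup G] [TopologicalSpace G]
    [IsTopologicalAddGroup G] {K : Set G} {c : G} (hc : c ∈ interior K) :
    (· - c) '' K ∈ 𝓝 0 := by
  have := Filter.image_mem_map (m := Homeomorph.subRight c) (mem_interior_iff_mem_nhds.1 hc)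
  rwa [Homeomorph.map_nhds_eq, Homeomorph.subRight_apply, sub_self] at this

section ConvexBody

variable {E : Type*} [NormedAddCommGroup E] [NormedSpace ℝ E]

theorem exists_mem_eq_gauge_smul {S : Set E} (hconv : Convex ℝ S) (h0 : S ∈ 𝓝 0)
    (hcl : IsClosed S) (hb : Bornology.IsBounded S) (w : E) : ∃ s ∈ S, w = gauge S w • s := by
  rcases (gauge_nonneg w).eq_or_lt' with hw | hw
  · refine ⟨0, mem_of_mem_nhds h0, ?_⟩
    rwa [smul_zero, ← gauge_eq_zero (absorbent_nhds_zero h0)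
      (NormedSpace.isVonNBounded_of_isBounded ℝ hb)]
  · refine ⟨(gauge S w)⁻¹ • w, ?_, by rw [smul_inv_smul₀ hw.ne']⟩
    refine hcl.closure_subset ((gauge_le_one_iff_mem_closure hconv h0).1 ?_)
    rw [gauge_smul_of_nonneg (inv_nonneg.2 hw.le), smul_eq_mul, inv_mul_cancel₀ hw.ne']

variable {K : Set E}

theorem Convex.image_sub_const (hconv : Convex ℝ K) (c : E) : Convex ℝ ((· - c) '' K) := by
  simpa only [sub_eq_neg_add] using hconv.translate (-c)

theorem exists_mem_eq_gauge_image_sub_smul (hconv : Convex ℝ K) (hcomp : IsCompact K) {c : E}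
    (hc : c ∈ interior K) (w : E) : ∃ k ∈ K, w = gauge ((· - c) '' K) w • (k - c) := by
  have hcomp' : IsCompact ((· - c) '' K) := hcomp.image (continuous_sub_right c)
  obtain ⟨_, ⟨k, hk, rfl⟩, hw⟩ := exists_mem_eq_gauge_smul (hconv.image_sub_const c)
    (image_sub_const_mem_nhds_zero hc) hcomp'.isClosed hcomp'.isBounded w
  exact ⟨k, hk, hw⟩

theorem gauge_image_sub_le_div (hconv : Convex ℝ K) (hcomp : IsCompact K) {x y : E}
    (hy : y ∈ interior K) (hxy : gauge ((· - y) '' K) (x - y) < 1) (w : E) :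
    gauge ((· - x) '' K) w ≤ gauge ((· - y) '' K) w / (1 - gauge ((· - y) '' K) (x - y)) := by
  obtain ⟨k, hk, hw⟩ := exists_mem_eq_gauge_image_sub_smul hconv hcomp hy w
  obtain ⟨k', hk', hx⟩ := exists_mem_eq_gauge_image_sub_smul hconv hcomp hy (x - y)
  set a := gauge ((· - y) '' K) (x - y)
  set t := gauge ((· - y) '' K) w
  have ha : 0 < 1 - a := sub_pos.2 hxy
  have hmem : a • k' + (1 - a) • k ∈ K := hconv hk' hk (gauge_nonneg _) ha.le (by ring)
  have hsub : a • k' + (1 - a) • k - x = (1 - a) • (k - y) := by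
    linear_combination (norm := module) -hx
  have hw' : w = (t / (1 - a)) • (a • k' + (1 - a) • k - x) := by
    rw [hsub, smul_smul, div_mul_cancel₀ _ ha.ne', hw]
  calc gauge ((· - x) '' K) w
      = t / (1 - a) * gauge ((· - x) '' K) (a • k' + (1 - a) • k - x) := by
        rw [hw', gauge_smul_of_nonneg (div_nonneg (gauge_nonneg _) ha.le), smul_eq_mul]
    _ ≤ t / (1 - a) := by
        refine mul_le_of_le_one_right (div_nonneg (gauge_nonneg _) ha.le) ?_
        exact gauge_le_one_of_mem ⟨_, hmem, rfl⟩

end ConvexBody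

/-- If `x, y ∈ int K` with `max(‖x−y‖_{K−y}, ‖y−x‖_{K−y}) ≤ α < 1`, then for
every `z`, `‖z − x‖_{K−x} ≤ ‖z − y‖_{K−y} + (α/(1−α))·|1 − ‖z − y‖_{K−y}|`. -/
theorem gauge_recenter_le' (n : ℕ) (K : Set (Fin n → ℝ))
    (hconv : Convex ℝ K) (hcomp : IsCompact K)
    (x y : Fin n → ℝ) (hx : x ∈ interior K) (hy : y ∈ interior K) (α : ℝ)
    (hα : max (gauge ((· - y) '' K) (x - y)) (gauge ((· - y) '' K) (y - x)) ≤ α)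
    (hα1 : α < 1) (z : Fin n → ℝ) :
    gauge ((· - x) '' K) (z - x) ≤
      gauge ((· - y) '' K) (z - y) +
        (α / (1 - α)) * |1 - gauge ((· - y) '' K) (z - y)| := by
  obtain ⟨hxy, hyx⟩ := max_le_iff.1 hα
  have hrecenter {v : Fin n → ℝ} (hv : gauge ((· - y) '' K) v ≤ α) :
      gauge ((· - x) '' K) v ≤ α / (1 - α) :=
    (gauge_image_sub_le_div hconv hcomp hy (hxy.trans_lt hα1) v).trans <|
      div_le_div₀ ((gauge_nonneg _).trans hxy) hv (sub_pos.2 hα1) (by linarith)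
  have hshift : max (gauge ((· - x) '' K) (y - x)) (gauge ((· - x) '' K) (-(y - x))) ≤
      α / (1 - α) :=
    max_le (hrecenter hyx) (by rw [neg_sub]; exact hrecenter hxy)
  obtain ⟨k, hk, hz⟩ := exists_mem_eq_gauge_image_sub_smul hconv hcomp hy (z - y)
  set t := gauge ((· - y) '' K) (z - y)
  have hzx : z - x = t • (k - x) + (1 - t) • (y - x) := by
    linear_combination (norm := module) hz
  calc gauge ((· - x) '' K) (z - x)
      ≤ gauge ((· - x) '' K) (t • (k - x)) + gauge ((· - x) '' K) ((1 - t) • (y - x)) := by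
        rw [hzx]
        exact gauge_add_le (hconv.image_sub_const x)
          (absorbent_nhds_zero (image_sub_const_mem_nhds_zero hx)) _ _
    _ ≤ t * 1 + |1 - t| * (α / (1 - α)) := by
        gcongr
        · rw [gauge_smul_of_nonneg (gauge_nonneg _), smul_eq_mul]
          exact mul_le_mul_of_nonneg_left (gauge_le_one_of_mem ⟨k, hk, rfl⟩) (gauge_nonneg _)
        · exact (gauge_smul_le_abs_mul_max _ _ _).trans
            (mul_le_mul_of_nonneg_left hshift (abs_nonneg _))
    _ = _ := by ring
end

section
/- Let C ⊆ ℝⁿ be a γ-symmetric convex body with 0 ∈ int(C), β > 0, and v ∈ ℝⁿ with β ≤ ‖v‖_C ≤ (3/2)β. Define C_v⁺ = βC ∩ (v − βC) and C_v⁻ = (βC − v) ∩ (−βC). Then vol(C_v⁺) = vol(C_v⁻) ≥ (γ/4)ⁿ vol(βC). -/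
/-!
The body `C_v⁻` is the reflection `-C_v⁺`. For the bound, put `S = βC`: the gauge condition gives
`(2/3)v ∈ S`, so for every `k` in the symmetric part `S ∩ -S` both `v/2 + k/4` and `v/2 - k/4` are
the convex combinations `(3/4)·(2/3)v + (1/4)·(±k)` of points of `S`. Hence `C_v⁺` contains a
translate of `(1/4)(S ∩ -S)`, whose volume is at least `(1/4)ⁿ γⁿ vol S`.
-/

open Set Pointwise MeasureTheory Module

theorem neg_inter_image_sub {G : Type*} [AddCommGroup G] (A : Set G) (v : G) :
    -(A ∩ (fun c => v - c) '' A) = (fun c => c - v) '' A ∩ -A := by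
  ext x
  simp only [mem_neg, mem_inter_iff, mem_image]
  constructor
  · rintro ⟨hx, c, hc, hcx⟩
    exact ⟨⟨c, hc, by rw [← neg_sub, hcx, neg_neg]⟩, hx⟩
  · rintro ⟨⟨c, hc, rfl⟩, hx⟩
    exact ⟨hx, c, hc, (neg_sub c v).symm⟩

theorem mem_smul_of_gauge_le {E : Type*} [AddCommGroup E] [Module ℝ E] [TopologicalSpace E]
    [IsTopologicalAddGroup E] [ContinuousSMul ℝ E] {C : Set E} (hconv : Convex ℝ C)
    (hclosed : IsClosed C) (hC : C ∈ nhds 0) {r : ℝ} (hr : 0 < r) {x : E} (hx : gauge C x ≤ r) :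
    x ∈ r • C := by
  rwa [mem_smul_set_iff_inv_smul_mem₀ hr.ne', ← hclosed.closure_eq,
    ← gauge_le_one_iff_mem_closure hconv hC, gauge_smul_of_nonneg (inv_nonneg.2 hr.le),
    smul_eq_mul, inv_mul_le_iff₀ hr, mul_one]

theorem vadd_smul_inter_neg_subset_inter_image_sub {E : Type*} [AddCommGroup E] [Module ℝ E]
    {S : Set E} (hS : Convex ℝ S) {v : E} (hv : (2 / 3 : ℝ) • v ∈ S) :
    (2⁻¹ : ℝ) • v +ᵥ (4⁻¹ : ℝ) • (S ∩ -S) ⊆ S ∩ (fun c => v - c) '' S := by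
  rintro _ ⟨_, ⟨k, ⟨hk, hnk⟩, rfl⟩, rfl⟩
  have hcomb : ∀ w ∈ S, (3 / 4 : ℝ) • (2 / 3 : ℝ) • v + (1 / 4 : ℝ) • w ∈ S := fun w hw =>
    hS hv hw (by norm_num) (by norm_num) (by norm_num)
  refine ⟨?_, _, hcomb (-k) (mem_neg.1 hnk), ?_⟩
  · convert hcomb k hk using 1
    simp only [vadd_eq_add]
    module
  · simp only [vadd_eq_add]
    module

section Haar

variable {E : Type*} [NormedAddCommGroup E] [NormedSpace ℝ E] [MeasurableSpace E] [BorelSpace E]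
  [FiniteDimensional ℝ E] (μ : Measure E) [μ.IsAddHaarMeasure]

theorem le_addHaar_smul_inter_neg {C : Set E} {c r : ℝ} (hr : 0 < r)
    (hsym : ENNReal.ofReal c * μ C ≤ μ (C ∩ -C)) :
    ENNReal.ofReal c * μ (r • C) ≤ μ (r • C ∩ -(r • C)) := by
  rw [← smul_set_neg, ← smul_set_inter₀ hr.ne', Measure.addHaar_smul_of_nonneg μ hr.le,
    Measure.addHaar_smul_of_nonneg μ hr.le, mul_left_comm]
  gcongr

theorem le_addHaar_inter_image_sub {S : Set E} (hS : Convex ℝ S) {v : E}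
    (hv : (2 / 3 : ℝ) • v ∈ S) {c : ℝ} (hsym : ENNReal.ofReal c * μ S ≤ μ (S ∩ -S)) :
    ENNReal.ofReal ((4⁻¹ : ℝ) ^ finrank ℝ E) * (ENNReal.ofReal c * μ S) ≤
      μ (S ∩ (fun c => v - c) '' S) :=
  calc ENNReal.ofReal ((4⁻¹ : ℝ) ^ finrank ℝ E) * (ENNReal.ofReal c * μ S)
      ≤ ENNReal.ofReal ((4⁻¹ : ℝ) ^ finrank ℝ E) * μ (S ∩ -S) := by gcongr
    _ = μ ((2⁻¹ : ℝ) • v +ᵥ (4⁻¹ : ℝ) • (S ∩ -S)) := by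
      rw [measure_vadd, Measure.addHaar_smul_of_nonneg μ (by norm_num)]
    _ ≤ μ (S ∩ (fun c => v - c) '' S) :=
      measure_mono (vadd_smul_inter_neg_subset_inter_image_sub hS hv)

end Haar

theorem intersection_lemma_general (n : ℕ) (C : Set (Fin n → ℝ))
    (hconv : Convex ℝ C) (hcomp : IsCompact C) (hint : 0 ∈ interior C)
    (γ : ℝ)
    (hsym : ENNReal.ofReal (γ ^ n) * volume C ≤ volume (C ∩ -C))
    (β : ℝ) (hβ : 0 < β) (v : Fin n → ℝ)
    (hv2 : gauge C v ≤ (3 / 2) * β) :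
    volume ((β • C) ∩ ((fun c => v - c) '' (β • C))) =
        volume (((fun c => c - v) '' (β • C)) ∩ (-(β • C))) ∧
      ENNReal.ofReal ((γ / 4) ^ n) * volume (β • C) ≤
        volume ((β • C) ∩ ((fun c => v - c) '' (β • C))) := by
  refine ⟨by rw [← neg_inter_image_sub, Measure.measure_neg], ?_⟩
  have hv : (2 / 3 : ℝ) • v ∈ β • C := by
    refine mem_smul_of_gauge_le hconv hcomp.isClosed (mem_interior_iff_mem_nhds.1 hint) hβ ?_
    rw [gauge_smul_of_nonneg (by norm_num), smul_eq_mul]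
    linarith
  calc ENNReal.ofReal ((γ / 4) ^ n) * volume (β • C)
      = ENNReal.ofReal ((4⁻¹ : ℝ) ^ n) * (ENNReal.ofReal (γ ^ n) * volume (β • C)) := by
        rw [← mul_assoc, ← ENNReal.ofReal_mul (by positivity), ← mul_pow, div_eq_inv_mul]
    _ ≤ volume ((β • C) ∩ ((fun c => v - c) '' (β • C))) := by
      simpa only [finrank_fin_fun] using le_addHaar_inter_image_sub volume (hconv.smul β) hv
        (le_addHaar_smul_inter_neg volume hβ hsym)

/-- Intersection lemma: for a `γ`-symmetric convex body `C` and `β ≤ ‖v‖_C ≤ (3/2)β`,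
the bodies `C_v⁺ = βC ∩ (v − βC)` and `C_v⁻ = (βC − v) ∩ (−βC)` have equal volume,
at least `(γ/4)ⁿ vol(βC)`. -/
theorem intersection_lemma (n : ℕ) (C : Set (Fin n → ℝ))
    (hconv : Convex ℝ C) (hcomp : IsCompact C) (hint : 0 ∈ interior C)
    (γ : ℝ) (hγ0 : 0 < γ) (hγ1 : γ ≤ 1)
    (hsym : ENNReal.ofReal (γ ^ n) * volume C ≤ volume (C ∩ -C))
    (β : ℝ) (hβ : 0 < β) (v : Fin n → ℝ)
    (hv1 : β ≤ gauge C v) (hv2 : gauge C v ≤ (3 / 2) * β) :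
    volume ((β • C) ∩ ((fun c => v - c) '' (β • C))) =
        volume (((fun c => c - v) '' (β • C)) ∩ (-(β • C))) ∧
      ENNReal.ofReal ((γ / 4) ^ n) * volume (β • C) ≤
        volume ((β • C) ∩ ((fun c => v - c) '' (β • C))) :=
  intersection_lemma_general n C hconv hcomp hint γ hsym β hβ v hv2
end
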